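/- Fix finite sets Θ, 𝒳, 𝒴 and T ≥ 1. Let the model be given by input kernels q_t (pmfs on 𝒳 depending on the past data only, not on θ) and label kernels k_t, where k_t(· | ν, h_t) is a pmf on 𝒴 for each θ-value ν and each history h_t. Let π and π̃ be pmfs on Θ with π absolutely continuous with respect to π̃, and let the data (X_0, Y_1, …, X_{T−1}, Y_T) be generated with θ ∼ π and labels drawn from k_t(· | θ, H_t). For a prior ρ on Θ, let P̂^ρ_t(· | h_t) = ∑_ν ρ(ν | h_t) k_t(· | ν, h_t) denote the Bayes posterior predictive under prior ρ, where ρ(· | h_t) is the posterior of θ given h_t computed by Bayes' rule with prior ρ and the kernels k_s. Then (1/T)·∑_{t=0}^{T−1} E[ D_KL( P̂^π_t(·|H_t) ‖ P̂^{π̃}_t(·|H_t) ) ] ≤ D_KL(π ‖ π̃)/T, where the expectation is under the true (prior-π) law of the data. -/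

import Mathlib

/-!
Write `M^ρ_j` for the prior-`ρ` marginal likelihood of the first `j` labels and
`R_j = log M^π_j - log M^π̃_j`. The posterior predictive is the ratio
`P̂^ρ_t(b) = M^ρ_{t+1}(…, y_t = b) / M^ρ_t`, so averaging the increment `R_{t+1} - R_t` over the
next label drawn from `P̂^π_t` gives exactly `D_KL(P̂^π_t ‖ P̂^π̃_t)`; the input kernels do not
depend on `θ` and integrate out. Summing over `t` telescopes (`R_0 = 0`), which leaves `E[R_T]`,
and the log-sum inequality bounds `E[R_T] = ∑_ν π ν E_ν[log (M^π_T / M^π̃_T)]` by `D_KL(π ‖ π̃)`.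
-/

open scoped Classical ENNReal

noncomputable section

/-- KL divergence between pmfs on a finite set, valued in `[0,∞]`. -/
def klDivF {A : Type*} [Fintype A] (p q : A → ℝ) : ℝ≥0∞ :=
  if ∀ a, q a = 0 → p a = 0 then ENNReal.ofReal (∑ a, p a * Real.log (p a / q a)) else ⊤

variable {Θ 𝒳 𝒴 : Type*} [Fintype Θ] [Fintype 𝒳] [Fintype 𝒴] {T : ℕ}

/-- The history `h_t = (x_{0:t}, y_{1:t})` read off from a full trajectory `(x, y)`. -/
def hist (t : Fin T) (x : Fin T → 𝒳) (y : Fin T → 𝒴) :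
    (Fin ((t : ℕ) + 1) → 𝒳) × (Fin (t : ℕ) → 𝒴) :=
  (fun i => x (Fin.castLE t.isLt i), fun i => y (Fin.castLE (le_of_lt t.isLt) i))

/-- The past data `(x_{0:t-1}, y_{1:t})` strictly before the input `x_t`. -/
def past (t : Fin T) (x : Fin T → 𝒳) (y : Fin T → 𝒴) :
    (Fin (t : ℕ) → 𝒳) × (Fin (t : ℕ) → 𝒴) :=
  (fun i => x (Fin.castLE (le_of_lt t.isLt) i), fun i => y (Fin.castLE (le_of_lt t.isLt) i))

/-- Likelihood of the labels `y_{1:t}` of the history `h_t` under parameter `ν`. -/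
def partialLik (k : ∀ t : Fin T, Θ → ((Fin ((t : ℕ) + 1) → 𝒳) × (Fin (t : ℕ) → 𝒴)) → 𝒴 → ℝ)
    (t : Fin T) (ν : Θ) (x : Fin T → 𝒳) (y : Fin T → 𝒴) : ℝ :=
  ∏ s : Fin T, if (s : ℕ) < (t : ℕ) then k s ν (hist s x y) (y s) else 1

/-- Bayes posterior of `θ` given the history `h_t`, under prior `ρ` and kernels `k`. -/
def post (k : ∀ t : Fin T, Θ → ((Fin ((t : ℕ) + 1) → 𝒳) × (Fin (t : ℕ) → 𝒴)) → 𝒴 → ℝ)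
    (ρ : Θ → ℝ) (t : Fin T) (x : Fin T → 𝒳) (y : Fin T → 𝒴) (ν : Θ) : ℝ :=
  ρ ν * partialLik k t ν x y / ∑ ν', ρ ν' * partialLik k t ν' x y

/-- Bayes posterior predictive `P̂^ρ_t(b | h_t) = ∑_ν ρ(ν|h_t) k_t(b|ν,h_t)`. -/
def predictive (k : ∀ t : Fin T, Θ → ((Fin ((t : ℕ) + 1) → 𝒳) × (Fin (t : ℕ) → 𝒴)) → 𝒴 → ℝ)
    (ρ : Θ → ℝ) (t : Fin T) (x : Fin T → 𝒳) (y : Fin T → 𝒴) (b : 𝒴) : ℝ :=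
  ∑ ν, post k ρ t x y ν * k t ν (hist t x y) b

/-- Likelihood of a full trajectory `(x,y)` given parameter `ν`. -/
def lik (q : ∀ t : Fin T, ((Fin (t : ℕ) → 𝒳) × (Fin (t : ℕ) → 𝒴)) → 𝒳 → ℝ)
    (k : ∀ t : Fin T, Θ → ((Fin ((t : ℕ) + 1) → 𝒳) × (Fin (t : ℕ) → 𝒴)) → 𝒴 → ℝ)
    (ν : Θ) (x : Fin T → 𝒳) (y : Fin T → 𝒴) : ℝ :=
  ∏ t : Fin T, q t (past t x y) (x t) * k t ν (hist t x y) (y t)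

section FiniteKL

open Finset Real

theorem eq_zero_of_pos_imp_pos {α : Type*} {p q : α → ℝ} (hp : ∀ a, 0 ≤ p a)
    (h : ∀ a, 0 < p a → 0 < q a) (a : α) (hq : q a = 0) : p a = 0 :=
  ((hp a).eq_or_lt.resolve_right fun ha => (h a ha).ne' hq).symm

variable {α : Type*} [Fintype α]

def IsPMF (p : α → ℝ) : Prop := (∀ a, 0 ≤ p a) ∧ ∑ a, p a = 1

theorem nonempty_of_sum_eq_one {p : α → ℝ} (hp : ∑ a, p a = 1) : Nonempty α := by
  by_contra h
  rw [not_nonempty_iff] at h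
  simp at hp

def klDivReal (p q : α → ℝ) : ℝ := ∑ a, p a * log (p a / q a)

theorem klDivF_eq_ofReal_klDivReal {p q : α → ℝ} (h : ∀ a, q a = 0 → p a = 0) :
    klDivF p q = ENNReal.ofReal (klDivReal p q) :=
  if_pos h

/-- The log-sum inequality: Jensen for `x ↦ x log x` with weights `q a / ∑ q` at the points
`p a / q a`. -/
theorem mul_log_sum_div_sum_le_klDivReal {p q : α → ℝ} (hp : ∀ a, 0 ≤ p a) (hq : ∀ a, 0 ≤ q a)
    (h : ∀ a, q a = 0 → p a = 0) :
    (∑ a, p a) * log ((∑ a, p a) / ∑ a, q a) ≤ klDivReal p q := by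
  set Q := ∑ a, q a
  rcases (sum_nonneg fun a _ => hq a : 0 ≤ Q).eq_or_lt with hQ | hQ
  · have hp0 : ∀ a, p a = 0 := fun a =>
      h a ((sum_eq_zero_iff_of_nonneg fun a _ => hq a).1 hQ.symm a (mem_univ a))
    simp [klDivReal, hp0]
  have hweight : ∀ a, q a / Q * (p a / q a) = p a / Q := by
    intro a
    rcases (hq a).eq_or_lt with hqa | hqa
    · simp [← hqa, h a hqa.symm]
    · field_simp
  have jensen := convexOn_mul_log.map_sum_le (t := univ) (w := fun a => q a / Q)
    (p := fun a => p a / q a) (fun a _ => div_nonneg (hq a) hQ.le)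
    (by rw [← sum_div, div_self hQ.ne']) (fun a _ => div_nonneg (hp a) (hq a))
  simp only [smul_eq_mul, hweight, ← mul_assoc, ← sum_div] at jensen
  have hdiv : (∑ a, p a) / Q * log ((∑ a, p a) / Q) ≤ klDivReal p q / Q := by
    simpa only [klDivReal, sum_div, mul_div_right_comm] using jensen
  rwa [← mul_div_right_comm, div_le_div_iff_of_pos_right hQ] at hdiv

theorem klDivReal_nonneg {p q : α → ℝ} (hp : IsPMF p) (hq : IsPMF q)
    (h : ∀ a, q a = 0 → p a = 0) : 0 ≤ klDivReal p q := by
  simpa [hp.2, hq.2] using mul_log_sum_div_sum_le_klDivReal hp.1 hq.1 h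

end FiniteKL

theorem Fintype.sum_sum_update {ι α M : Type*} [Fintype ι] [DecidableEq ι] [Fintype α]
    [AddCommMonoid M] (j : ι) (f : (ι → α) → M) :
    ∑ y : ι → α, ∑ c : α, f (Function.update y j c) = Fintype.card α • ∑ y, f y := by
  have hinv : Function.Involutive fun p : (ι → α) × α => (Function.update p.1 j p.2, p.1 j) := by
    rintro ⟨y, c⟩
    simp
  calc ∑ y : ι → α, ∑ c : α, f (Function.update y j c)
      = ∑ p : (ι → α) × α, f (hinv.toPerm _ p).1 := (Fintype.sum_prod_type' _).symm
    _ = ∑ p : (ι → α) × α, f p.1 := Equiv.sum_comp (hinv.toPerm _) fun p => f p.1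
    _ = Fintype.card α • ∑ y, f y := by
      simp [Fintype.sum_prod_type, Finset.smul_sum]

section Model

open Function Finset

variable {Θ 𝒳 𝒴 : Type*} {T : ℕ}

def DependsOnPrefix {β : Type*} (m n : ℕ) (F : (Fin T → 𝒳) → (Fin T → 𝒴) → β) : Prop :=
  ∀ ⦃x x' : Fin T → 𝒳⦄ ⦃y y' : Fin T → 𝒴⦄, (∀ i : Fin T, (i : ℕ) < m → x i = x' i) →
    (∀ i : Fin T, (i : ℕ) < n → y i = y' i) → F x y = F x' y'

namespace DependsOnPrefix

variable {β : Type*} {m n : ℕ} {F : (Fin T → 𝒳) → (Fin T → 𝒴) → β}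

theorem mono (hF : DependsOnPrefix m n F) {m' n' : ℕ} (hm : m ≤ m') (hn : n ≤ n') :
    DependsOnPrefix m' n' F :=
  fun _ _ _ _ hx hy => hF (fun i hi => hx i (hi.trans_le hm)) (fun i hi => hy i (hi.trans_le hn))

theorem update_left (hF : DependsOnPrefix m n F) {i : Fin T} (hi : m ≤ i) (x : Fin T → 𝒳)
    (y : Fin T → 𝒴) (a : 𝒳) : F (update x i a) y = F x y :=
  hF (fun j hj => update_of_ne (ne_of_apply_ne Fin.val (by omega)) a x) fun _ _ => rfl

theorem update_right (hF : DependsOnPrefix m n F) {i : Fin T} (hi : n ≤ i) (x : Fin T → 𝒳)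
    (y : Fin T → 𝒴) (c : 𝒴) : F x (update y i c) = F x y :=
  hF (fun _ _ => rfl) fun j hj => update_of_ne (ne_of_apply_ne Fin.val (by omega)) c y

end DependsOnPrefix

theorem dependsOnPrefix_hist (t : Fin T) :
    DependsOnPrefix (t + 1) t (hist (𝒳 := 𝒳) (𝒴 := 𝒴) t) := by
  intro x x' y y' hx hy
  simp only [hist]
  congr 1 <;> funext i
  · exact hx _ (by simp only [Fin.val_castLE]; omega)
  · exact hy _ (by simp only [Fin.val_castLE]; omega)

theorem dependsOnPrefix_past (t : Fin T) :
    DependsOnPrefix t t (past (𝒳 := 𝒳) (𝒴 := 𝒴) t) := by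
  intro x x' y y' hx hy
  simp only [past]
  congr 1 <;> funext i
  · exact hx _ (by simp only [Fin.val_castLE]; omega)
  · exact hy _ (by simp only [Fin.val_castLE]; omega)

theorem prod_ite_lt_succ {M : Type*} [CommMonoid M] (t : Fin T) (f : Fin T → M) :
    ∏ s : Fin T, (if (s : ℕ) < t + 1 then f s else 1)
      = (∏ s : Fin T, if (s : ℕ) < t then f s else 1) * f t := by
  simp only [← prod_filter]
  rw [show univ.filter (fun s : Fin T => (s : ℕ) < t + 1)
      = insert t (univ.filter fun s : Fin T => (s : ℕ) < t) by
      ext s; simp only [mem_filter, mem_univ, true_and, mem_insert, Fin.ext_iff]; omega,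
    prod_insert (by simp), mul_comm]

variable (q : ∀ t : Fin T, ((Fin (t : ℕ) → 𝒳) × (Fin (t : ℕ) → 𝒴)) → 𝒳 → ℝ)
  (k : ∀ t : Fin T, Θ → ((Fin ((t : ℕ) + 1) → 𝒳) × (Fin (t : ℕ) → 𝒴)) → 𝒴 → ℝ)

/-- `partialLik k t` for every `j : ℕ`, including `j = T`. -/
def labelLik (j : ℕ) (ν : Θ) (x : Fin T → 𝒳) (y : Fin T → 𝒴) : ℝ :=
  ∏ s : Fin T, if (s : ℕ) < j then k s ν (hist s x y) (y s) else 1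

def inputLik (j : ℕ) (x : Fin T → 𝒳) (y : Fin T → 𝒴) : ℝ :=
  ∏ s : Fin T, if (s : ℕ) < j then q s (past s x y) (x s) else 1

def marginalLik [Fintype Θ] (ρ : Θ → ℝ) (j : ℕ) (x : Fin T → 𝒳) (y : Fin T → 𝒴) : ℝ :=
  ∑ ν, ρ ν * labelLik k j ν x y

def logMarginalLikRatio [Fintype Θ] (π πt : Θ → ℝ) (j : ℕ) (x : Fin T → 𝒳) (y : Fin T → 𝒴) :
    ℝ :=
  Real.log (marginalLik k π j x y) - Real.log (marginalLik k πt j x y)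

variable {q k}

theorem dependsOnPrefix_labelLik (j : ℕ) (ν : Θ) : DependsOnPrefix j j (labelLik k j ν) := by
  intro x x' y y' hx hy
  refine prod_congr rfl fun s _ => ?_
  split_ifs with hs
  · rw [(dependsOnPrefix_hist s).mono hs hs.le hx hy, hy s hs]
  · rfl

theorem dependsOnPrefix_inputLik (j : ℕ) : DependsOnPrefix j (j - 1) (inputLik q j) := by
  intro x x' y y' hx hy
  refine prod_congr rfl fun s _ => ?_
  split_ifs with hs
  · rw [(dependsOnPrefix_past s).mono hs.le (by omega) hx hy, hx s hs]
  · rfl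

theorem labelLik_succ (t : Fin T) (ν : Θ) (x : Fin T → 𝒳) (y : Fin T → 𝒴) :
    labelLik k (t + 1) ν x y = labelLik k t ν x y * k t ν (hist t x y) (y t) :=
  prod_ite_lt_succ t _

theorem inputLik_succ (t : Fin T) (x : Fin T → 𝒳) (y : Fin T → 𝒴) :
    inputLik q (t + 1) x y = inputLik q t x y * q t (past t x y) (x t) :=
  prod_ite_lt_succ t _

theorem lik_eq_inputLik_mul_labelLik (ν : Θ) (x : Fin T → 𝒳) (y : Fin T → 𝒴) :
    lik q k ν x y = inputLik q T x y * labelLik k T ν x y := by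
  simp only [lik, inputLik, labelLik, Fin.is_lt, if_true, prod_mul_distrib]

theorem labelLik_nonneg (hk0 : ∀ t ν h b, 0 ≤ k t ν h b) (j : ℕ) (ν : Θ) (x : Fin T → 𝒳)
    (y : Fin T → 𝒴) : 0 ≤ labelLik k j ν x y :=
  prod_nonneg fun _ _ => by split_ifs <;> simp [hk0]

theorem inputLik_nonneg (hq0 : ∀ t h a, 0 ≤ q t h a) (j : ℕ) (x : Fin T → 𝒳)
    (y : Fin T → 𝒴) : 0 ≤ inputLik q j x y :=
  prod_nonneg fun _ _ => by split_ifs <;> simp [hq0]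

theorem labelLik_ne_zero_of_lik_ne_zero {ν : Θ} {x : Fin T → 𝒳} {y : Fin T → 𝒴}
    (h : lik q k ν x y ≠ 0) (j : ℕ) : labelLik k j ν x y ≠ 0 := by
  rw [lik_eq_inputLik_mul_labelLik] at h
  have hL := right_ne_zero_of_mul h
  simp only [labelLik, prod_ne_zero_iff, mem_univ, Fin.is_lt, if_true, forall_const] at hL ⊢
  intro s
  split_ifs
  exacts [hL s, one_ne_zero]

theorem lik_nonneg (hq0 : ∀ t h a, 0 ≤ q t h a) (hk0 : ∀ t ν h b, 0 ≤ k t ν h b) (ν : Θ)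
    (x : Fin T → 𝒳) (y : Fin T → 𝒴) : 0 ≤ lik q k ν x y :=
  prod_nonneg fun _ _ => mul_nonneg (hq0 _ _ _) (hk0 _ _ _ _)

section Marginalization

variable [Fintype 𝒳] [Fintype 𝒴]

theorem sum_sum_inputLik_mul_labelLik_succ_update (hq : ∀ t h, IsPMF (q t h))
    (hk : ∀ t ν h, IsPMF (k t ν h)) (i : Fin T) (ν : Θ) (x : Fin T → 𝒳) (y : Fin T → 𝒴) :
    ∑ a, ∑ c, inputLik q (i + 1) (update x i a) (update y i c)
        * labelLik k (i + 1) ν (update x i a) (update y i c)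
      = inputLik q i x y * labelLik k i ν x y := by
  have hQ := (dependsOnPrefix_inputLik (q := q) i).mono le_rfl (Nat.sub_le _ _)
  have hL := dependsOnPrefix_labelLik (k := k) i ν
  simp only [inputLik_succ, labelLik_succ, hQ.update_right le_rfl, hQ.update_left le_rfl,
    hL.update_right le_rfl, hL.update_left le_rfl, (dependsOnPrefix_past i).update_right le_rfl,
    (dependsOnPrefix_past i).update_left le_rfl, (dependsOnPrefix_hist i).update_right le_rfl,
    update_self]
  calc _ = ∑ a, inputLik q i x y * labelLik k i ν x y * q i (past i x y) a
          * ∑ c, k i ν (hist i (update x i a) y) c := by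
        refine sum_congr rfl fun a _ => ?_
        rw [mul_sum]
        exact sum_congr rfl fun c _ => by ring
    _ = inputLik q i x y * labelLik k i ν x y := by
        simp only [(hk _ _ _).2, mul_one, ← mul_sum, (hq _ _).2]

theorem card_mul_sum_inputLik_mul_labelLik_succ_mul (hq : ∀ t h, IsPMF (q t h))
    (hk : ∀ t ν h, IsPMF (k t ν h)) (i : Fin T) (ν : Θ)
    {F : (Fin T → 𝒳) → (Fin T → 𝒴) → ℝ} (hF : DependsOnPrefix i i F) :
    (Fintype.card 𝒳 * Fintype.card 𝒴 : ℝ) *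
        ∑ x, ∑ y, inputLik q (i + 1) x y * labelLik k (i + 1) ν x y * F x y
      = ∑ x, ∑ y, inputLik q i x y * labelLik k i ν x y * F x y := by
  set W := fun x y => inputLik q (i + 1) x y * labelLik k (i + 1) ν x y * F x y
  symm
  calc ∑ x, ∑ y, inputLik q i x y * labelLik k i ν x y * F x y
      = ∑ x, ∑ y, ∑ a, ∑ c, W (update x i a) (update y i c) := by
        refine sum_congr rfl fun x _ => sum_congr rfl fun y _ => ?_
        simp only [W, hF.update_right le_rfl, hF.update_left le_rfl, ← sum_mul,
          sum_sum_inputLik_mul_labelLik_succ_update hq hk]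
    _ = ∑ x, ∑ a, Fintype.card 𝒴 • ∑ y, W (update x i a) y :=
        sum_congr rfl fun x _ => by
          rw [sum_comm]
          exact sum_congr rfl fun a _ => Fintype.sum_sum_update i _
    _ = Fintype.card 𝒴 • Fintype.card 𝒳 • ∑ x, ∑ y, W x y := by
        simp only [← smul_sum]
        rw [Fintype.sum_sum_update i fun x => ∑ y, W x y]
    _ = _ := by
        simp only [nsmul_eq_mul]
        ring

theorem card_pow_mul_sum_lik_mul (hq : ∀ t h, IsPMF (q t h)) (hk : ∀ t ν h, IsPMF (k t ν h))
    (ν : Θ) {j : ℕ} (hj : j ≤ T) {F : (Fin T → 𝒳) → (Fin T → 𝒴) → ℝ}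
    (hF : DependsOnPrefix j j F) :
    (Fintype.card 𝒳 * Fintype.card 𝒴 : ℝ) ^ (T - j) * ∑ x, ∑ y, lik q k ν x y * F x y
      = ∑ x, ∑ y, inputLik q j x y * labelLik k j ν x y * F x y := by
  induction hj using Nat.decreasingInduction generalizing F with
  | self => simp [lik_eq_inputLik_mul_labelLik]
  | of_succ j hj ih =>
    rw [← card_mul_sum_inputLik_mul_labelLik_succ_mul hq hk ⟨j, hj⟩ ν hF,
      ← ih (hF.mono j.le_succ j.le_succ), show T - j = T - (j + 1) + 1 by omega, pow_succ]
    ring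

theorem sum_lik_eq_one [Nonempty 𝒳] [Nonempty 𝒴] (hq : ∀ t h, IsPMF (q t h))
    (hk : ∀ t ν h, IsPMF (k t ν h)) (ν : Θ) : ∑ x, ∑ y, lik q k ν x y = 1 := by
  have h := card_pow_mul_sum_lik_mul hq hk ν (Nat.zero_le T) (F := fun _ _ => 1)
    fun _ _ _ _ _ _ => rfl
  simp only [mul_one, inputLik, labelLik, Nat.not_lt_zero, if_false, prod_const_one, sum_const,
    card_univ, Fintype.card_fun, Fintype.card_fin, nsmul_eq_mul, Nat.cast_pow, Nat.sub_zero,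
    mul_pow] at h
  exact mul_left_cancel₀ (by positivity) (h.trans (mul_one _).symm)

end Marginalization

section Prior

variable [Fintype Θ]

theorem dependsOnPrefix_marginalLik (ρ : Θ → ℝ) (j : ℕ) :
    DependsOnPrefix j j (marginalLik k ρ j) := by
  intro x x' y y' hx hy
  simp only [marginalLik, dependsOnPrefix_labelLik j _ hx hy]

theorem marginalLik_zero {ρ : Θ → ℝ} (hρ : ∑ ν, ρ ν = 1) (x : Fin T → 𝒳) (y : Fin T → 𝒴) :
    marginalLik k ρ 0 x y = 1 := by
  simp [marginalLik, labelLik, hρ]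

theorem marginalLik_succ_update (ρ : Θ → ℝ) (t : Fin T) (x : Fin T → 𝒳) (y : Fin T → 𝒴)
    (b : 𝒴) :
    marginalLik k ρ (t + 1) x (update y t b)
      = ∑ ν, ρ ν * labelLik k t ν x y * k t ν (hist t x y) b := by
  simp only [marginalLik, labelLik_succ, (dependsOnPrefix_labelLik _ _).update_right le_rfl,
    (dependsOnPrefix_hist t).update_right le_rfl, update_self, mul_assoc]

theorem sum_marginalLik_succ_update [Fintype 𝒴] (hk : ∀ t ν h, IsPMF (k t ν h)) (ρ : Θ → ℝ)
    (t : Fin T) (x : Fin T → 𝒳) (y : Fin T → 𝒴) :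
    ∑ b, marginalLik k ρ (t + 1) x (update y t b) = marginalLik k ρ t x y := by
  simp only [marginalLik_succ_update]
  rw [sum_comm]
  simp only [← mul_sum, (hk _ _ _).2, mul_one]
  rfl

theorem predictive_eq_div (ρ : Θ → ℝ) (t : Fin T) (x : Fin T → 𝒳) (y : Fin T → 𝒴) (b : 𝒴) :
    predictive k ρ t x y b
      = marginalLik k ρ (t + 1) x (update y t b) / marginalLik k ρ t x y := by
  simp only [predictive, post, marginalLik_succ_update, sum_div, div_mul_eq_mul_div]
  rfl

theorem dependsOnPrefix_predictive (ρ : Θ → ℝ) (t : Fin T) :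
    DependsOnPrefix (t + 1) t (predictive k ρ t) := by
  intro x x' y y' hx hy
  have hL : ∀ ν, partialLik k t ν x y = partialLik k t ν x' y' := fun ν =>
    (dependsOnPrefix_labelLik (k := k) t ν).mono (Nat.le_succ _) le_rfl hx hy
  funext b
  simp only [predictive, post, hL, dependsOnPrefix_hist t hx hy]

theorem marginalLik_nonneg (hk0 : ∀ t ν h b, 0 ≤ k t ν h b) {ρ : Θ → ℝ} (hρ : ∀ ν, 0 ≤ ρ ν)
    (j : ℕ) (x : Fin T → 𝒳) (y : Fin T → 𝒴) : 0 ≤ marginalLik k ρ j x y :=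
  sum_nonneg fun ν _ => mul_nonneg (hρ ν) (labelLik_nonneg hk0 _ _ _ _)

theorem isPMF_predictive [Fintype 𝒴] (hk : ∀ t ν h, IsPMF (k t ν h)) {ρ : Θ → ℝ}
    (hρ : ∀ ν, 0 ≤ ρ ν) (t : Fin T) {x : Fin T → 𝒳} {y : Fin T → 𝒴}
    (hM : marginalLik k ρ t x y ≠ 0) : IsPMF (predictive k ρ t x y) := by
  refine ⟨fun b => ?_, ?_⟩
  · have hk0 : ∀ t ν h b, 0 ≤ k t ν h b := fun t ν h b => (hk t ν h).1 b
    rw [predictive_eq_div]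
    exact div_nonneg (marginalLik_nonneg hk0 hρ _ _ _) (marginalLik_nonneg hk0 hρ _ _ _)
  · rw [← div_self hM]
    simp only [predictive_eq_div, ← sum_div, sum_marginalLik_succ_update hk]

theorem marginalLik_pos_iff (hk0 : ∀ t ν h b, 0 ≤ k t ν h b) {ρ : Θ → ℝ} (hρ : ∀ ν, 0 ≤ ρ ν)
    {j : ℕ} {x : Fin T → 𝒳} {y : Fin T → 𝒴} :
    0 < marginalLik k ρ j x y ↔ ∃ ν, 0 < ρ ν ∧ 0 < labelLik k j ν x y := by
  rw [marginalLik,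
    sum_pos_iff_of_nonneg fun ν _ => mul_nonneg (hρ ν) (labelLik_nonneg hk0 _ _ _ _)]
  constructor
  · rintro ⟨ν, -, h⟩
    exact ⟨ν, pos_of_mul_pos_left h (labelLik_nonneg hk0 _ _ _ _), pos_of_mul_pos_right h (hρ ν)⟩
  · rintro ⟨ν, hρν, hL⟩
    exact ⟨ν, mem_univ ν, mul_pos hρν hL⟩

theorem marginalLik_pos_of_absCont (hk0 : ∀ t ν h b, 0 ≤ k t ν h b) {π πt : Θ → ℝ}
    (hπ0 : ∀ ν, 0 ≤ π ν) (hπt0 : ∀ ν, 0 ≤ πt ν) (hac : ∀ ν, 0 < π ν → 0 < πt ν) {j : ℕ}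
    {x : Fin T → 𝒳} {y : Fin T → 𝒴} (h : 0 < marginalLik k π j x y) :
    0 < marginalLik k πt j x y := by
  obtain ⟨ν, hπν, hL⟩ := (marginalLik_pos_iff hk0 hπ0).1 h
  exact (marginalLik_pos_iff hk0 hπt0).2 ⟨ν, hac ν hπν, hL⟩

theorem marginalLik_pos_of_succ (hk0 : ∀ t ν h b, 0 ≤ k t ν h b) {ρ : Θ → ℝ}
    (hρ : ∀ ν, 0 ≤ ρ ν) {t : Fin T} {x : Fin T → 𝒳} {y : Fin T → 𝒴}
    (h : 0 < marginalLik k ρ (t + 1) x y) : 0 < marginalLik k ρ t x y := by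
  obtain ⟨ν, hρν, hL⟩ := (marginalLik_pos_iff hk0 hρ).1 h
  rw [labelLik_succ] at hL
  exact (marginalLik_pos_iff hk0 hρ).2 ⟨ν, hρν, pos_of_mul_pos_left hL (hk0 _ _ _ _)⟩

theorem marginalLik_pos_of_lik_pos (hk0 : ∀ t ν h b, 0 ≤ k t ν h b) {π : Θ → ℝ}
    (hπ0 : ∀ ν, 0 ≤ π ν) {ν : Θ} {x : Fin T → 𝒳} {y : Fin T → 𝒴}
    (h : π ν * lik q k ν x y ≠ 0) (j : ℕ) : 0 < marginalLik k π j x y :=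
  (marginalLik_pos_iff hk0 hπ0).2 ⟨ν, (hπ0 ν).lt_of_ne' (left_ne_zero_of_mul h),
    (labelLik_nonneg hk0 j ν x y).lt_of_ne'
      (labelLik_ne_zero_of_lik_ne_zero (right_ne_zero_of_mul h) j)⟩

theorem predictive_absCont (hk0 : ∀ t ν h b, 0 ≤ k t ν h b) {π πt : Θ → ℝ}
    (hπ0 : ∀ ν, 0 ≤ π ν) (hπt0 : ∀ ν, 0 ≤ πt ν) (hac : ∀ ν, 0 < π ν → 0 < πt ν) {t : Fin T}
    {x : Fin T → 𝒳} {y : Fin T → 𝒴} (hM : 0 < marginalLik k π t x y) (b : 𝒴)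
    (hb : predictive k πt t x y b = 0) : predictive k π t x y b = 0 := by
  have hMt := marginalLik_pos_of_absCont hk0 hπ0 hπt0 hac hM
  rw [predictive_eq_div, div_eq_zero_iff, or_iff_left hMt.ne'] at hb
  rw [predictive_eq_div, div_eq_zero_iff]
  left
  by_contra hN
  exact (marginalLik_pos_of_absCont hk0 hπ0 hπt0 hac
    ((marginalLik_nonneg hk0 hπ0 _ _ _).lt_of_ne' hN)).ne' hb

theorem klDivReal_predictive_nonneg [Fintype 𝒴] (hk : ∀ t ν h, IsPMF (k t ν h)) {π πt : Θ → ℝ}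
    (hπ0 : ∀ ν, 0 ≤ π ν) (hπt0 : ∀ ν, 0 ≤ πt ν) (hac : ∀ ν, 0 < π ν → 0 < πt ν) {t : Fin T}
    {x : Fin T → 𝒳} {y : Fin T → 𝒴} (hM : 0 < marginalLik k π t x y) :
    0 ≤ klDivReal (predictive k π t x y) (predictive k πt t x y) := by
  have hk0 : ∀ t ν h b, 0 ≤ k t ν h b := fun t ν h b => (hk t ν h).1 b
  exact klDivReal_nonneg (isPMF_predictive hk hπ0 t hM.ne')
    (isPMF_predictive hk hπt0 t (marginalLik_pos_of_absCont hk0 hπ0 hπt0 hac hM).ne')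
    (predictive_absCont hk0 hπ0 hπt0 hac hM)

theorem ofReal_mul_klDivF_predictive [Fintype 𝒴] (hk : ∀ t ν h, IsPMF (k t ν h))
    {π πt : Θ → ℝ} (hπ0 : ∀ ν, 0 ≤ π ν) (hπt0 : ∀ ν, 0 ≤ πt ν)
    (hac : ∀ ν, 0 < π ν → 0 < πt ν) (t : Fin T) (ν : Θ) (x : Fin T → 𝒳) (y : Fin T → 𝒴) :
    ENNReal.ofReal (π ν * lik q k ν x y) * klDivF (predictive k π t x y) (predictive k πt t x y)
      = ENNReal.ofReal (π ν * lik q k ν x y *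
          klDivReal (predictive k π t x y) (predictive k πt t x y)) := by
  have hk0 : ∀ t ν h b, 0 ≤ k t ν h b := fun t ν h b => (hk t ν h).1 b
  by_cases hw : π ν * lik q k ν x y = 0
  · simp [hw]
  have hM := marginalLik_pos_of_lik_pos hk0 hπ0 hw t
  rw [klDivF_eq_ofReal_klDivReal (predictive_absCont hk0 hπ0 hπt0 hac hM),
    ENNReal.ofReal_mul' (klDivReal_predictive_nonneg hk hπ0 hπt0 hac hM)]

theorem mul_klDivReal_predictive_nonneg [Fintype 𝒴] (hq0 : ∀ t h a, 0 ≤ q t h a)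
    (hk : ∀ t ν h, IsPMF (k t ν h)) {π πt : Θ → ℝ} (hπ0 : ∀ ν, 0 ≤ π ν)
    (hπt0 : ∀ ν, 0 ≤ πt ν) (hac : ∀ ν, 0 < π ν → 0 < πt ν) (t : Fin T) (ν : Θ)
    (x : Fin T → 𝒳) (y : Fin T → 𝒴) :
    0 ≤ π ν * lik q k ν x y * klDivReal (predictive k π t x y) (predictive k πt t x y) := by
  have hk0 : ∀ t ν h b, 0 ≤ k t ν h b := fun t ν h b => (hk t ν h).1 b
  by_cases hw : π ν * lik q k ν x y = 0
  · simp [hw]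
  exact mul_nonneg (mul_nonneg (hπ0 ν) (lik_nonneg hq0 hk0 ν x y))
    (klDivReal_predictive_nonneg hk hπ0 hπt0 hac (marginalLik_pos_of_lik_pos hk0 hπ0 hw t))

theorem sum_marginalLik_mul_logMarginalLikRatio_sub [Fintype 𝒴]
    (hk0 : ∀ t ν h b, 0 ≤ k t ν h b) {π πt : Θ → ℝ} (hπ0 : ∀ ν, 0 ≤ π ν)
    (hπt0 : ∀ ν, 0 ≤ πt ν) (hac : ∀ ν, 0 < π ν → 0 < πt ν) (t : Fin T) (x : Fin T → 𝒳)
    (y : Fin T → 𝒴) :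
    ∑ b, marginalLik k π (t + 1) x (update y t b) *
        (logMarginalLikRatio k π πt (t + 1) x (update y t b)
          - logMarginalLikRatio k π πt t x (update y t b))
      = marginalLik k π t x y * klDivReal (predictive k π t x y) (predictive k πt t x y) := by
  rw [klDivReal, mul_sum]
  refine sum_congr rfl fun b _ => ?_
  have hM_update : ∀ ρ, marginalLik k ρ t x (update y t b) = marginalLik k ρ t x y := fun ρ =>
    (dependsOnPrefix_marginalLik ρ t).update_right le_rfl x y b
  simp only [logMarginalLikRatio, predictive_eq_div, hM_update]
  rcases (marginalLik_nonneg hk0 hπ0 (t + 1) x (update y t b)).eq_or_lt with hN | hN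
  · simp [← hN]
  have hM : 0 < marginalLik k π t x y := hM_update π ▸ marginalLik_pos_of_succ hk0 hπ0 hN
  have hNt := marginalLik_pos_of_absCont hk0 hπ0 hπt0 hac hN
  have hMt := marginalLik_pos_of_absCont hk0 hπ0 hπt0 hac hM
  rw [Real.log_div (by positivity) (by positivity), Real.log_div hN.ne' hM.ne',
    Real.log_div hNt.ne' hMt.ne']
  field_simp
  ring

theorem dependsOnPrefix_logMarginalLikRatio (π πt : Θ → ℝ) (j : ℕ) :
    DependsOnPrefix j j (logMarginalLikRatio k π πt j) := by
  intro x x' y y' hx hy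
  simp only [logMarginalLikRatio, dependsOnPrefix_marginalLik _ j hx hy]

theorem sum_logMarginalLikRatio_succ_sub {π πt : Θ → ℝ} (hπ : ∑ ν, π ν = 1)
    (hπt : ∑ ν, πt ν = 1) (x : Fin T → 𝒳) (y : Fin T → 𝒴) :
    ∑ t : Fin T, (logMarginalLikRatio k π πt (t + 1) x y - logMarginalLikRatio k π πt t x y)
      = logMarginalLikRatio k π πt T x y := by
  rw [Fin.sum_univ_eq_sum_range (fun j => logMarginalLikRatio k π πt (j + 1) x y
    - logMarginalLikRatio k π πt j x y), sum_range_sub fun j => logMarginalLikRatio k π πt j x y]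
  simp [logMarginalLikRatio, marginalLik_zero hπ, marginalLik_zero hπt]

theorem marginalLik_mul_logMarginalLikRatio_le (hk0 : ∀ t ν h b, 0 ≤ k t ν h b) {π πt : Θ → ℝ}
    (hπ0 : ∀ ν, 0 ≤ π ν) (hπt0 : ∀ ν, 0 ≤ πt ν) (hac : ∀ ν, 0 < π ν → 0 < πt ν) (j : ℕ)
    (x : Fin T → 𝒳) (y : Fin T → 𝒴) :
    marginalLik k π j x y * logMarginalLikRatio k π πt j x y
      ≤ marginalLik k (fun ν => π ν * Real.log (π ν / πt ν)) j x y := by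
  have hlogsum := mul_log_sum_div_sum_le_klDivReal
    (p := fun ν => π ν * labelLik k j ν x y) (q := fun ν => πt ν * labelLik k j ν x y)
    (fun ν => mul_nonneg (hπ0 ν) (labelLik_nonneg hk0 j ν x y))
    (fun ν => mul_nonneg (hπt0 ν) (labelLik_nonneg hk0 j ν x y))
    fun ν h => by
      rcases mul_eq_zero.1 h with h | h <;> simp [h, eq_zero_of_pos_imp_pos hπ0 hac ν]
  have hlhs : marginalLik k π j x y * logMarginalLikRatio k π πt j x y
      = marginalLik k π j x y * Real.log (marginalLik k π j x y / marginalLik k πt j x y) := by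
    rcases (marginalLik_nonneg hk0 hπ0 j x y).eq_or_lt with hM | hM
    · simp [← hM]
    rw [logMarginalLikRatio, Real.log_div hM.ne'
      (marginalLik_pos_of_absCont hk0 hπ0 hπt0 hac hM).ne']
  have hrhs : klDivReal (fun ν => π ν * labelLik k j ν x y) (fun ν => πt ν * labelLik k j ν x y)
      = marginalLik k (fun ν => π ν * Real.log (π ν / πt ν)) j x y := by
    refine sum_congr rfl fun ν _ => ?_
    rcases eq_or_ne (labelLik k j ν x y) 0 with hL | hL
    · simp [hL]
    rw [mul_div_mul_right _ _ hL]
    ring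
  rw [hlhs, ← hrhs]
  exact hlogsum

section Expectation

variable [Fintype 𝒳] [Fintype 𝒴]

theorem sum_mul_sum_inputLik_mul_labelLik_mul (ρ : Θ → ℝ) (j : ℕ)
    (F : (Fin T → 𝒳) → (Fin T → 𝒴) → ℝ) :
    ∑ ν, ρ ν * ∑ x, ∑ y, inputLik q j x y * labelLik k j ν x y * F x y
      = ∑ x, ∑ y, inputLik q j x y * marginalLik k ρ j x y * F x y := by
  simp only [mul_sum, marginalLik, sum_mul]
  rw [sum_comm]
  refine sum_congr rfl fun x _ => ?_
  rw [sum_comm]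
  exact sum_congr rfl fun y _ => sum_congr rfl fun ν _ => by ring

/-- The tower property at step `t`: `hFG` says that `F` is the conditional expectation of `G`
given the history `h_t`, i.e. the average of `G` over the next label `y_t ∼ P̂^π_t`. -/
theorem sum_mul_sum_lik_mul_eq_of_condExp [Nonempty 𝒳] [Nonempty 𝒴]
    (hq : ∀ t h, IsPMF (q t h)) (hk : ∀ t ν h, IsPMF (k t ν h)) (π : Θ → ℝ) (t : Fin T)
    {F G : (Fin T → 𝒳) → (Fin T → 𝒴) → ℝ} (hF : DependsOnPrefix (t + 1) t F)
    (hG : DependsOnPrefix (t + 1) (t + 1) G)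
    (hFG : ∀ x y, ∑ b, marginalLik k π (t + 1) x (update y t b) * G x (update y t b)
      = marginalLik k π t x y * F x y) :
    ∑ ν, π ν * ∑ x, ∑ y, lik q k ν x y * F x y = ∑ ν, π ν * ∑ x, ∑ y, lik q k ν x y * G x y := by
  set c := (Fintype.card 𝒳 * Fintype.card 𝒴 : ℝ) ^ (T - (t + 1))
  have reduce : ∀ H, DependsOnPrefix (t + 1) (t + 1) H →
      Fintype.card 𝒴 * c * ∑ ν, π ν * ∑ x, ∑ y, lik q k ν x y * H x y
        = ∑ x, ∑ y, inputLik q (t + 1) x y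
            * ∑ b, marginalLik k π (t + 1) x (update y t b) * H x (update y t b) := by
    intro H hH
    have hQ := (dependsOnPrefix_inputLik (q := q) (t + 1)).update_right (i := t) (by simp)
    calc _ = Fintype.card 𝒴 * ∑ ν, π ν * (c * ∑ x, ∑ y, lik q k ν x y * H x y) := by
          rw [mul_assoc, mul_sum]
          simp only [mul_left_comm c]
      _ = Fintype.card 𝒴 * ∑ x, ∑ y, inputLik q (t + 1) x y * marginalLik k π (t + 1) x y
            * H x y := by
          simp only [c, card_pow_mul_sum_lik_mul hq hk _ (j := t + 1) t.isLt hH]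
          rw [sum_mul_sum_inputLik_mul_labelLik_mul]
      _ = _ := by
          rw [mul_sum]
          refine sum_congr rfl fun x _ => ?_
          rw [← nsmul_eq_mul, ← Fintype.sum_sum_update t]
          simp only [hQ, mul_assoc, ← mul_sum]
  have hc : (Fintype.card 𝒴 * c : ℝ) ≠ 0 := by positivity
  refine mul_left_cancel₀ hc ?_
  rw [reduce F (hF.mono le_rfl t.val.le_succ), reduce G hG]
  refine sum_congr rfl fun x _ => sum_congr rfl fun y _ => ?_
  rw [hFG]
  simp only [hF.update_right le_rfl, ← sum_mul, sum_marginalLik_succ_update hk]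

theorem sum_mul_sum_lik_mul_logMarginalLikRatio_le [Nonempty 𝒳] [Nonempty 𝒴]
    (hq : ∀ t h, IsPMF (q t h)) (hk : ∀ t ν h, IsPMF (k t ν h)) {π πt : Θ → ℝ}
    (hπ0 : ∀ ν, 0 ≤ π ν) (hπt0 : ∀ ν, 0 ≤ πt ν) (hac : ∀ ν, 0 < π ν → 0 < πt ν) :
    ∑ ν, π ν * ∑ x, ∑ y, lik q k ν x y * logMarginalLikRatio k π πt T x y
      ≤ klDivReal π πt := by
  have hk0 : ∀ t ν h b, 0 ≤ k t ν h b := fun t ν h b => (hk t ν h).1 b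
  set ρ := fun ν => π ν * Real.log (π ν / πt ν)
  calc _ = ∑ x, ∑ y, inputLik q T x y * marginalLik k π T x y
          * logMarginalLikRatio k π πt T x y := by
        simp only [lik_eq_inputLik_mul_labelLik]
        exact sum_mul_sum_inputLik_mul_labelLik_mul π T _
    _ ≤ ∑ x, ∑ y, inputLik q T x y * marginalLik k ρ T x y * 1 := by
        refine sum_le_sum fun x _ => sum_le_sum fun y _ => ?_
        rw [mul_assoc, mul_one]
        exact mul_le_mul_of_nonneg_left
          (marginalLik_mul_logMarginalLikRatio_le hk0 hπ0 hπt0 hac T x y)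
          (inputLik_nonneg (fun t h a => (hq t h).1 a) T x y)
    _ = ∑ ν, ρ ν * ∑ x, ∑ y, lik q k ν x y * 1 := by
        simp only [lik_eq_inputLik_mul_labelLik]
        exact (sum_mul_sum_inputLik_mul_labelLik_mul ρ T _).symm
    _ = klDivReal π πt := by simp [sum_lik_eq_one hq hk, klDivReal, ρ]

theorem sum_mul_lik_mul_klDivReal_predictive_le [Nonempty 𝒳] [Nonempty 𝒴]
    (hq : ∀ t h, IsPMF (q t h)) (hk : ∀ t ν h, IsPMF (k t ν h)) {π πt : Θ → ℝ}
    (hπ : IsPMF π) (hπt : IsPMF πt) (hac : ∀ ν, 0 < π ν → 0 < πt ν) :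
    ∑ t : Fin T, ∑ ν, ∑ x, ∑ y,
        π ν * lik q k ν x y * klDivReal (predictive k π t x y) (predictive k πt t x y)
      ≤ klDivReal π πt := by
  have hk0 : ∀ t ν h b, 0 ≤ k t ν h b := fun t ν h b => (hk t ν h).1 b
  set R := logMarginalLikRatio k π πt
  calc _ = ∑ t : Fin T, ∑ ν, π ν * ∑ x, ∑ y, lik q k ν x y * (R (t + 1) x y - R t x y) := by
        refine sum_congr rfl fun t _ => ?_
        simp only [mul_assoc, ← mul_sum]
        refine sum_mul_sum_lik_mul_eq_of_condExp hq hk π t (fun x x' y y' hx hy => ?_)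
          (fun x x' y y' hx hy => ?_)
          (sum_marginalLik_mul_logMarginalLikRatio_sub hk0 hπ.1 hπt.1 hac t)
        · simp only [dependsOnPrefix_predictive π t hx hy, dependsOnPrefix_predictive πt t hx hy]
        · simp only [R, dependsOnPrefix_logMarginalLikRatio π πt _ hx hy,
            (dependsOnPrefix_logMarginalLikRatio π πt t).mono t.val.le_succ t.val.le_succ hx hy]
    _ = ∑ ν, π ν * ∑ x, ∑ y, lik q k ν x y * R T x y := by
        rw [sum_comm]
        refine sum_congr rfl fun ν _ => ?_
        rw [← mul_sum]
        congr 1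
        simp only [R, ← sum_logMarginalLikRatio_succ_sub hπ.2 hπt.2, mul_sum]
        rw [sum_comm]
        exact sum_congr rfl fun x _ => sum_comm
    _ ≤ klDivReal π πt := sum_mul_sum_lik_mul_logMarginalLikRatio_le hq hk hπ.1 hπt.1 hac

theorem sum_ofReal_mul_klDivF_predictive_le [Nonempty 𝒳] [Nonempty 𝒴]
    (hq : ∀ t h, IsPMF (q t h)) (hk : ∀ t ν h, IsPMF (k t ν h)) {π πt : Θ → ℝ}
    (hπ : IsPMF π) (hπt : IsPMF πt) (hac : ∀ ν, 0 < π ν → 0 < πt ν) :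
    ∑ t : Fin T, ∑ ν, ∑ x, ∑ y,
        ENNReal.ofReal (π ν * lik q k ν x y) * klDivF (predictive k π t x y) (predictive k πt t x y)
      ≤ klDivF π πt := by
  have hnonneg := mul_klDivReal_predictive_nonneg (fun t h a => (hq t h).1 a) hk hπ.1 hπt.1 hac
  rw [klDivF_eq_ofReal_klDivReal (eq_zero_of_pos_imp_pos hπ.1 hac)]
  calc _ = ∑ t : Fin T, ∑ ν, ∑ x, ∑ y, ENNReal.ofReal
          (π ν * lik q k ν x y * klDivReal (predictive k π t x y) (predictive k πt t x y)) := by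
        simp only [ofReal_mul_klDivF_predictive hk hπ.1 hπt.1 hac]
    _ = ENNReal.ofReal (∑ t : Fin T, ∑ ν, ∑ x, ∑ y,
          π ν * lik q k ν x y * klDivReal (predictive k π t x y) (predictive k πt t x y)) := by
        simp (maxDischargeDepth := 5) only [ENNReal.ofReal_sum_of_nonneg, sum_nonneg, hnonneg,
          implies_true]
    _ ≤ _ := ENNReal.ofReal_le_ofReal
        (sum_mul_lik_mul_klDivReal_predictive_le hq hk hπ hπt hac)

end Expectation

end Prior

end Model

/-- misspecified prior error bound. -/
theorem statement3 (hT : 1 ≤ T)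
    (q : ∀ t : Fin T, ((Fin (t : ℕ) → 𝒳) × (Fin (t : ℕ) → 𝒴)) → 𝒳 → ℝ)
    (k : ∀ t : Fin T, Θ → ((Fin ((t : ℕ) + 1) → 𝒳) × (Fin (t : ℕ) → 𝒴)) → 𝒴 → ℝ)
    (hq : ∀ t h, (∀ a, 0 ≤ q t h a) ∧ ∑ a, q t h a = 1)
    (hk : ∀ t ν h, (∀ b, 0 ≤ k t ν h b) ∧ ∑ b, k t ν h b = 1)
    (π πt : Θ → ℝ)
    (hπ : (∀ ν, 0 ≤ π ν) ∧ ∑ ν, π ν = 1)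
    (hπt : (∀ ν, 0 ≤ πt ν) ∧ ∑ ν, πt ν = 1)
    (hac : ∀ ν, 0 < π ν → 0 < πt ν) :
    (T : ℝ≥0∞)⁻¹ * ∑ t : Fin T, ∑ ν : Θ, ∑ x : Fin T → 𝒳, ∑ y : Fin T → 𝒴,
        ENNReal.ofReal (π ν * lik q k ν x y) *
          klDivF (predictive k π t x y) (predictive k πt t x y)
      ≤ klDivF π πt / (T : ℝ≥0∞) := by
  have : Nonempty Θ := nonempty_of_sum_eq_one hπ.2
  have : Nonempty 𝒳 := nonempty_of_sum_eq_one (hq ⟨0, hT⟩ (Fin.elim0, Fin.elim0)).2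
  have : Nonempty 𝒴 := nonempty_of_sum_eq_one
    (hk ⟨0, hT⟩ (Classical.arbitrary Θ) (fun _ => Classical.arbitrary 𝒳, Fin.elim0)).2
  rw [ENNReal.div_eq_inv_mul]
  gcongr
  exact sum_ofReal_mul_klDivF_predictive_le hq hk hπ hπt hac

end
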